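/- Let k ≥ 1 and let π be a permutation of {1,…,n}. If π contains no k-zigzag pattern, then T^k(π) = id. -/

import Mathlib

private theorem length_takeWhile_ne_lt {w : List ℕ} {m : ℕ} (hm : m ∈ w) :
    (w.takeWhile (· ≠ m)).length < w.length := by
  induction w with
  | nil => cases hm
  | cons a as ih =>
    by_cases ha : a = m
    · subst ha
      simp [List.takeWhile_cons]
    · rw [List.takeWhile_cons_of_pos (by simpa using ha)]
      have hm' : m ∈ as := by
        rcases List.mem_cons.mp hm with h | h
        · exact absurd h.symm ha
        · exact h
      simpa using Nat.succ_lt_succ (ih hm')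

private theorem length_tail_dropWhile_lt {w : List ℕ} (hw : w ≠ []) (p : ℕ → Bool) :
    ((w.dropWhile p).tail).length < w.length := by
  cases hd : w.dropWhile p with
  | nil => simpa using List.length_pos_iff.mpr hw
  | cons x xs =>
    have h1 : (x :: xs).length ≤ w.length := by
      rw [← hd]; exact (List.dropWhile_sublist p).length_le
    simp only [List.tail_cons]
    exact lt_of_lt_of_le (by simp) h1

/-- The classical stack sort operator on words: `S(ε) = ε` and `S(L m R) = S(L) S(R) m`,
where `m` is the largest entry of the word `L m R`. -/
def stackSort : List ℕ → List ℕ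
  | [] => []
  | a :: as =>
    let m := ((a :: as).max?).getD 0
    stackSort ((a :: as).takeWhile (· ≠ m)) ++
      stackSort (((a :: as).dropWhile (· ≠ m)).tail) ++ [m]
termination_by w => w.length
decreasing_by
  · refine length_takeWhile_ne_lt ?_
    have : (a :: as).max? = some (((a :: as).max?).getD 0) := by
      cases h : (a :: as).max? with
      | none => simp [List.max?_eq_none_iff] at h
      | some b => simp
    exact List.max?_mem this
  · exact length_tail_dropWhile_lt (by simp) _

/-- The revstack sort operator `T = S ∘ rev`. -/
def revstackSort (w : List ℕ) : List ℕ := stackSort w.reverse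

/-- The word of the identity permutation of `{1,…,n}`, namely `1 2 ⋯ n`. -/
def idPerm (n : ℕ) : List ℕ := List.range' 1 n

/-- `w` is (the word of) a permutation of `{1,…,n}`. -/
def IsPermWord (n : ℕ) (w : List ℕ) : Prop := w.Perm (idPerm n)

/-- `x` precedes `y` in the word `w`, i.e. the position of `x` is smaller than that of `y`. -/
def Precedes (w : List ℕ) (x y : ℕ) : Prop := w.idxOf x < w.idxOf y

/-- `w` contains an occurrence of the pattern `132`: values `a < b < c` occurring in
the order `a, c, b`. -/
def Contains132 (w : List ℕ) : Prop :=
  ∃ a b c, a ∈ w ∧ b ∈ w ∧ c ∈ w ∧ a < b ∧ b < c ∧ Precedes w a c ∧ Precedes w c b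

/-- `w` contains an occurrence of the pattern `2431`: values `a < b < c < d` occurring in
the order `b, d, c, a`. -/
def Contains2431 (w : List ℕ) : Prop :=
  ∃ a b c d, a ∈ w ∧ b ∈ w ∧ c ∈ w ∧ d ∈ w ∧ a < b ∧ b < c ∧ c < d ∧
    Precedes w b d ∧ Precedes w d c ∧ Precedes w c a

/-- `w` contains an occurrence of the barred pattern `241 5̄ 3`: values `a < b < c < d`
occurring in the order `b, d, a, c` with no value `e > d` lying between `a` and `c` in `w`. -/
def ContainsBarred24153 (w : List ℕ) : Prop :=
  ∃ a b c d, a ∈ w ∧ b ∈ w ∧ c ∈ w ∧ d ∈ w ∧ a < b ∧ b < c ∧ c < d ∧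
    Precedes w b d ∧ Precedes w d a ∧ Precedes w a c ∧
    ¬ ∃ e, e ∈ w ∧ d < e ∧ Precedes w a e ∧ Precedes w e c

/-- The number of descents of a word. -/
def des (w : List ℕ) : ℕ := ((w.zip w.tail).filter (fun p => p.2 < p.1)).length

/-- The finset of all words of permutations of `{1,…,n}`. -/
def permsOf (n : ℕ) : Finset (List ℕ) := (idPerm n).permutations.toFinset

/-- The finset of `t`-revstack sortable permutations of `{1,…,n}`. -/
def revstackSortable (n t : ℕ) : Finset (List ℕ) :=
  (permsOf n).filter (fun w => revstackSort^[t] w = idPerm n)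

/-- The finset of `t`-stack sortable permutations of `{1,…,n}`. -/
def stackSortable (n t : ℕ) : Finset (List ℕ) :=
  (permsOf n).filter (fun w => stackSort^[t] w = idPerm n)

/-- The descent polynomial `W(A;x) = ∑_{π ∈ A} x^{1+des(π)}` of a set of permutations. -/
noncomputable def descPoly (A : Finset (List ℕ)) : Polynomial ℚ :=
  ∑ w ∈ A, Polynomial.X ^ (1 + des w)

/-- The `m`-th Eulerian polynomial `A_m(x) = ∑_{π ∈ S_m} x^{1+des(π)}`, with `A_0(x) = 1`. -/
noncomputable def eulerianPoly (m : ℕ) : Polynomial ℚ :=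
  if m = 0 then 1 else descPoly (permsOf m)

/-- `v_t(n,i)`: the number of `t`-revstack sortable permutations of `{1,…,n}`
with exactly `i` descents. -/
def vNum (t n i : ℕ) : ℕ := ((revstackSortable n t).filter (fun w => des w = i)).card

/-- `w_t(n,i)`: the number of `t`-stack sortable permutations of `{1,…,n}`
with exactly `i` descents. -/
def wNum (t n i : ℕ) : ℕ := ((stackSortable n t).filter (fun w => des w = i)).card

/-- `z = (z 0, z 1, …, z (k+1))` is a `k`-zigzag pattern in `w`: the values are strictly
decreasing, and `w⁻¹(z (2i)) < w⁻¹(z 0) < w⁻¹(z (2i-1))` for all relevant `i ≥ 1`. -/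
def IsZigzag (w : List ℕ) (k : ℕ) (z : ℕ → ℕ) : Prop :=
  (∀ i ≤ k + 1, z i ∈ w) ∧
  (∀ i j, i < j → j ≤ k + 1 → z j < z i) ∧
  (∀ i, 1 ≤ i → 2 * i ≤ k + 1 → Precedes w (z (2 * i)) (z 0)) ∧
  (∀ i, 1 ≤ i → 2 * i - 1 ≤ k + 1 → Precedes w (z 0) (z (2 * i - 1)))

/-- A `k`-zigzag `z` in `w` is interrupted if some value `c > z 0` lies between two
even-indexed entries of `z`, or between two odd-indexed entries of `z`, in `w`. -/
def ZigzagInterrupted (w : List ℕ) (k : ℕ) (z : ℕ → ℕ) : Prop :=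
  ∃ c, c ∈ w ∧ z 0 < c ∧
    ((∃ a b, 1 ≤ a ∧ 1 ≤ b ∧ 2 * a ≤ k + 1 ∧ 2 * b ≤ k + 1 ∧
        Precedes w (z (2 * a)) c ∧ Precedes w c (z (2 * b))) ∨
     (∃ a b, 1 ≤ a ∧ 1 ≤ b ∧ 2 * a - 1 ≤ k + 1 ∧ 2 * b - 1 ≤ k + 1 ∧
        Precedes w (z (2 * a - 1)) c ∧ Precedes w c (z (2 * b - 1))))

/-! A comparison in `T(w)` is decided by `w` alone: for `y < v`, the entry `v` comes before `y` in
`T(w)` iff `y` comes before `v` in `w` and some entry larger than `v` lies between them. This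
follows from `T(L n R) = T(R) T(L) n` by induction, splitting `w` at its maximal entry `n`.

Consequently, if `z` is a `k`-zigzag of `T(w)`, then prepending the rightmost entry `c > z 0`
to the left of `z 0` in `w` yields a `(k+1)`-zigzag of `w`: the odd entries of `z` come after
`z 0` in `T(w)`, hence before `c` in `w`, while the even entries come before `z 0` in `T(w)`,
hence after `c` in `w`. So if `π` has no `k`-zigzag, then `T(π)` has no `(k-1)`-zigzag, and
after `k` steps we reach a permutation without a `0`-zigzag, i.e. without an inversion. -/

open scoped List

theorem List.pair_sublist_append_iff {α : Type*} {a b : α} {l₁ l₂ : List α} :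
    [a, b] <+ l₁ ++ l₂ ↔ [a, b] <+ l₁ ∨ a ∈ l₁ ∧ b ∈ l₂ ∨ [a, b] <+ l₂ := by
  rw [List.sublist_append_iff]
  constructor
  · rintro ⟨l, r, h, h₁, h₂⟩
    rcases l with _ | ⟨x, _ | ⟨y, _ | _⟩⟩ <;>
      simp only [List.nil_append, List.cons_append, List.cons.injEq] at h <;> grind
  · rintro (h | ⟨h₁, h₂⟩ | h)
    · exact ⟨[a, b], [], by simp, h, by simp⟩
    · exact ⟨[a], [b], rfl, by simpa using h₁, by simpa using h₂⟩
    · exact ⟨[], [a, b], rfl, by simp, h⟩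

theorem List.triple_sublist_append_iff {α : Type*} {a b c : α} {l₁ l₂ : List α} :
    [a, b, c] <+ l₁ ++ l₂ ↔
      [a, b, c] <+ l₁ ∨ a ∈ l₁ ∧ [b, c] <+ l₂ ∨ [a, b] <+ l₁ ∧ c ∈ l₂ ∨ [a, b, c] <+ l₂ := by
  rw [List.sublist_append_iff]
  constructor
  · rintro ⟨l, r, h, h₁, h₂⟩
    rcases l with _ | ⟨x, _ | ⟨y, _ | ⟨z, _ | _⟩⟩⟩ <;>
      simp only [List.nil_append, List.cons_append, List.cons.injEq] at h <;> grind
  · rintro (h | ⟨h₁, h₂⟩ | ⟨h₁, h₂⟩ | h)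
    · exact ⟨[a, b, c], [], by simp, h, by simp⟩
    · exact ⟨[a], [b, c], rfl, by simpa using h₁, h₂⟩
    · exact ⟨[a, b], [c], rfl, h₁, by simpa using h₂⟩
    · exact ⟨[], [a, b, c], rfl, by simp, h⟩

theorem List.Nodup.pair_sublist_iff {α : Type*} [BEq α] [LawfulBEq α] {x y : α} {w : List α}
    (hw : w.Nodup) (hy : y ∈ w) : [x, y] <+ w ↔ w.idxOf x < w.idxOf y := by
  induction w <;> grind

theorem List.Nodup.triple_sublist_iff {α : Type*} {x y z : α} {w : List α} (hw : w.Nodup) :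
    [x, y, z] <+ w ↔ [x, y] <+ w ∧ [y, z] <+ w := by
  refine ⟨fun h => ⟨.trans (by simp) h, .trans (by simp) h⟩, ?_⟩
  induction w with
  | nil => simp
  | cons a w ih =>
    rw [List.nodup_cons] at hw
    simp only [List.sublist_cons_iff (l := [x, y, z]), List.sublist_cons_iff (l := [x, y]),
      List.sublist_cons_iff (l := [y, z]), List.cons.injEq]
    rintro ⟨hxy | ⟨_, ⟨rfl, rfl⟩, hy⟩, hyz | ⟨_, ⟨rfl, rfl⟩, -⟩⟩
    · exact .inl (ih hw.2 ⟨hxy, hyz⟩)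
    · exact absurd (hxy.subset (by simp)) hw.1
    · exact .inr ⟨_, ⟨rfl, rfl⟩, hyz⟩
    · exact absurd (hy.subset (by simp)) hw.1

theorem precedes_iff_pair_sublist {w : List ℕ} {x y : ℕ} (hw : w.Nodup) (hy : y ∈ w) :
    Precedes w x y ↔ [x, y] <+ w :=
  (hw.pair_sublist_iff hy).symm

theorem Precedes.mem_left {w : List ℕ} {x y : ℕ} (h : Precedes w x y) : x ∈ w :=
  List.idxOf_lt_length_iff.mp (h.trans_le List.idxOf_le_length)

theorem Precedes.of_not_precedes {w : List ℕ} {x y : ℕ} (hx : x ∈ w) (hxy : x ≠ y)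
    (h : ¬ Precedes w y x) : Precedes w x y := by
  have := (List.idxOf_inj hx).not.mpr hxy
  unfold Precedes at *
  omega

theorem IsPermWord.nodup {n : ℕ} {w : List ℕ} (h : IsPermWord n w) : w.Nodup :=
  h.nodup_iff.mpr (List.nodup_range' ..)

theorem stackSort_append_cons {L R : List ℕ} {n : ℕ} (hL : ∀ x ∈ L, x ≤ n)
    (hR : ∀ x ∈ R, x ≤ n) (hnL : n ∉ L) :
    stackSort (L ++ n :: R) = stackSort L ++ stackSort R ++ [n] := by
  have hmax : (L ++ n :: R).max? = some n := List.max?_eq_some_iff.mpr ⟨by simp, by grind⟩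
  have hL' : ∀ x ∈ L, !decide (x = n) := by grind
  obtain ⟨a, as, h⟩ := List.exists_cons_of_ne_nil (List.append_ne_nil_of_right_ne_nil L
    (List.cons_ne_nil n R))
  rw [h, stackSort, ← h, hmax]
  simp [List.takeWhile_append_of_pos hL', List.dropWhile_append_of_pos hL']

theorem induction_on_max_split {P : List ℕ → Prop} (nil : P [])
    (split : ∀ L n R, (∀ x ∈ L, x ≤ n) → (∀ x ∈ R, x ≤ n) → n ∉ L → P L → P R →
      P (L ++ n :: R))
    (w : List ℕ) : P w := by
  induction h : w.length using Nat.strong_induction_on generalizing w with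
  | _ N ih =>
    obtain rfl | hw := eq_or_ne w []
    · exact nil
    obtain ⟨m, hm, hle⟩ : ∃ m ∈ w, ∀ x ∈ w, x ≤ m :=
      ⟨_, List.max_mem hw, fun x hx => List.le_max_of_mem hx⟩
    obtain ⟨L, R, rfl, hnL⟩ := List.eq_append_cons_of_mem hm
    exact split L m R (fun x hx => hle x (by simp [hx])) (fun x hx => hle x (by simp [hx])) hnL
      (ih _ (by grind) L rfl) (ih _ (by grind) R rfl)

theorem stackSort_perm (w : List ℕ) : stackSort w ~ w := by
  induction w using induction_on_max_split with
  | nil => simp [stackSort]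
  | split L n R hL hR hnL ihL ihR =>
    rw [stackSort_append_cons hL hR hnL, List.append_assoc]
    exact (ihL.append (ihR.append_right [n])).trans
      ((List.perm_append_singleton n R).append_left L)

theorem exists_triple_sublist_append_cons_iff {a b n : ℕ} {L R : List ℕ} (hab : a < b)
    (hL : ∀ x ∈ L, x ≤ n) (hR : ∀ x ∈ R, x ≤ n) (hnL : n ∉ L) :
    (∃ c, b < c ∧ [b, c, a] <+ L ++ n :: R) ↔
      (∃ c, b < c ∧ [b, c, a] <+ L) ∨ b ∈ L ∧ a ∈ R ∨ ∃ c, b < c ∧ [b, c, a] <+ R := by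
  have ha_mem : b ∈ L → a ∈ n :: R → a ∈ R := fun hb ha =>
    List.mem_of_ne_of_mem (by have := hL b hb; omega) ha
  constructor
  · rintro ⟨c, hbc, h⟩
    rcases List.triple_sublist_append_iff.mp h with h | ⟨hb, h⟩ | ⟨h, ha⟩ | h
    · exact .inl ⟨c, hbc, h⟩
    · exact .inr (.inl ⟨hb, ha_mem hb (h.subset (by simp))⟩)
    · have hb : b ∈ L := h.subset (by simp)
      exact .inr (.inl ⟨hb, ha_mem hb ha⟩)
    · rcases List.sublist_cons_iff.mp h with h | ⟨_, ⟨rfl, rfl⟩, h⟩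
      · exact .inr (.inr ⟨c, hbc, h⟩)
      · have := hR c (h.subset (by simp))
        omega
  · rintro (⟨c, hbc, h⟩ | ⟨hb, ha⟩ | ⟨c, hbc, h⟩)
    · exact ⟨c, hbc, h.trans (List.sublist_append_left _ _)⟩
    · refine ⟨n, lt_of_le_of_ne (hL b hb) (by rintro rfl; exact hnL hb), ?_⟩
      exact (List.singleton_sublist.mpr hb).append ((List.singleton_sublist.mpr ha).cons_cons n)
    · exact ⟨c, hbc, h.trans ((List.sublist_cons_self n R).trans (List.sublist_append_right L _))⟩

theorem pair_sublist_stackSort_iff {a b : ℕ} (hab : a < b) (w : List ℕ) :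
    [b, a] <+ stackSort w ↔ ∃ c, b < c ∧ [b, c, a] <+ w := by
  induction w using induction_on_max_split with
  | nil => simp [stackSort]
  | split L n R hL hR hnL ihL ihR =>
    rw [stackSort_append_cons hL hR hnL, List.append_assoc, List.pair_sublist_append_iff,
      List.pair_sublist_append_iff, ihL, ihR, exists_triple_sublist_append_cons_iff hab hL hR hnL]
    simp only [(stackSort_perm _).mem_iff, List.mem_append, List.mem_singleton]
    constructor
    · rintro (h | ⟨hb, ha | ha⟩ | h | ⟨hb, ha⟩ | h)
      · exact .inl h
      · exact .inr (.inl ⟨hb, ha⟩)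
      · have := hL b hb
        omega
      · exact .inr (.inr h)
      · have := hR b hb
        omega
      · simpa using h.length_le
    · rintro (h | ⟨hb, ha⟩ | h)
      · exact .inl h
      · exact .inr (.inl ⟨hb, .inl ha⟩)
      · exact .inr (.inr (.inl h))

theorem revstackSort_perm (w : List ℕ) : revstackSort w ~ w :=
  (stackSort_perm w.reverse).trans (List.reverse_perm w)

theorem pair_sublist_revstackSort_iff {y v : ℕ} (hyv : y < v) (w : List ℕ) :
    [v, y] <+ revstackSort w ↔ ∃ c, v < c ∧ [y, c, v] <+ w := by
  simp [revstackSort, pair_sublist_stackSort_iff hyv, List.sublist_reverse_iff]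

theorem precedes_revstackSort_iff {w : List ℕ} {y v : ℕ} (hw : w.Nodup) (hy : y ∈ w)
    (hv : v ∈ w) (hyv : y < v) :
    Precedes (revstackSort w) v y ↔ ∃ c, v < c ∧ Precedes w y c ∧ Precedes w c v := by
  have hw' : (revstackSort w).Nodup := (revstackSort_perm w).nodup_iff.mpr hw
  rw [precedes_iff_pair_sublist hw' ((revstackSort_perm w).mem_iff.mpr hy),
    pair_sublist_revstackSort_iff hyv]
  refine exists_congr fun c => and_congr_right fun _ => ?_
  rw [hw.triple_sublist_iff, precedes_iff_pair_sublist hw hv]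
  exact and_congr_left fun hcv => (precedes_iff_pair_sublist hw (hcv.subset (by simp))).symm

/-- The witness `c` is the rightmost entry larger than `v` to the left of `v`. -/
theorem exists_precedes_revstackSort_iff_precedes {w : List ℕ} {v : ℕ} (hw : w.Nodup)
    (hv : v ∈ w) (h : ∃ y ∈ w, y < v ∧ Precedes (revstackSort w) v y) :
    ∃ c ∈ w, v < c ∧ Precedes w c v ∧
      ∀ y ∈ w, y < v → (Precedes (revstackSort w) v y ↔ Precedes w y c) := by
  obtain ⟨y₀, hy₀, hy₀v, h₀⟩ := h
  obtain ⟨c₀, hvc₀, -, hc₀v⟩ := (precedes_revstackSort_iff hw hy₀ hv hy₀v).mp h₀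
  obtain ⟨c, hc, hmax⟩ := Finset.exists_max_image
    {c ∈ w.toFinset | v < c ∧ w.idxOf c < w.idxOf v} w.idxOf
    ⟨c₀, by simpa using ⟨hc₀v.mem_left, hvc₀, hc₀v⟩⟩
  simp only [Finset.mem_filter, List.mem_toFinset] at hc hmax
  obtain ⟨hcw, hvc, hcv⟩ := hc
  refine ⟨c, hcw, hvc, hcv, fun y hy hyv => ?_⟩
  rw [precedes_revstackSort_iff hw hy hv hyv]
  constructor
  · rintro ⟨c', hvc', hyc', hc'v⟩
    exact lt_of_lt_of_le hyc' (hmax c' ⟨hc'v.mem_left, hvc', hc'v⟩)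
  · exact fun hyc => ⟨c, hvc, hyc, hcv⟩

theorem exists_isZigzag_succ_of_isZigzag_revstackSort {w : List ℕ} {k : ℕ} {z : ℕ → ℕ}
    (hw : w.Nodup) (hz : IsZigzag (revstackSort w) k z) : ∃ z', IsZigzag w (k + 1) z' := by
  obtain ⟨hmem, hdec, heven, hodd⟩ := hz
  have hmem' : ∀ i ≤ k + 1, z i ∈ w := fun i hi => (revstackSort_perm w).mem_iff.mp (hmem i hi)
  have hlt : ∀ i, 1 ≤ i → i ≤ k + 1 → z i < z 0 := fun i hi hik => hdec 0 i hi hik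
  obtain ⟨c, hcw, hvc, hcv, hc⟩ := exists_precedes_revstackSort_iff_precedes hw
    (hmem' 0 (by omega)) ⟨z 1, hmem' 1 (by omega), hlt 1 le_rfl (by omega), hodd 1 le_rfl (by omega)⟩
  refine ⟨fun i => if i = 0 then c else z (i - 1), ?_, ?_, ?_, ?_⟩
  · intro i hi
    dsimp only
    split_ifs
    exacts [hcw, hmem' _ (by omega)]
  · intro i j hij hj
    simp only [show j ≠ 0 by omega, if_false]
    split_ifs
    · rcases Nat.eq_zero_or_pos (j - 1) with h | h
      · rwa [h]
      · exact (hlt _ h (by omega)).trans hvc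
    · exact hdec _ _ (by omega) (by omega)
  · intro i hi h2i
    simp only [show 2 * i ≠ 0 by omega, if_false, if_true]
    exact (hc _ (hmem' _ (by omega)) (hlt _ (by omega) (by omega))).mp (hodd i hi (by omega))
  · intro i hi h2i
    simp only [show 2 * i - 1 ≠ 0 by omega, if_false, if_true]
    rcases eq_or_lt_of_le hi with rfl | hi
    · exact hcv
    rw [show 2 * i - 1 - 1 = 2 * (i - 1) by omega]
    have hyv := hlt (2 * (i - 1)) (by omega) (by omega)
    refine Precedes.of_not_precedes hcw (by omega) fun hyc => ?_
    exact lt_asymm ((hc _ (hmem' _ (by omega)) hyv).mpr hyc) (heven (i - 1) (by omega) (by omega))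

theorem eq_idPerm_of_not_isZigzag_zero {n : ℕ} {π : List ℕ} (hπ : IsPermWord n π)
    (h : ¬ ∃ z, IsZigzag π 0 z) : π = idPerm n := by
  refine List.Perm.eq_of_pairwise' (r := (· ≤ ·)) ?_
    ((List.pairwise_lt_range' ..).imp le_of_lt) hπ
  rw [List.pairwise_iff_forall_sublist]
  intro a b hab
  by_contra! hba
  refine h ⟨fun i => if i = 0 then a else b, ?_, ?_, ?_, ?_⟩
  · intro i _
    dsimp only
    split_ifs
    exacts [hab.subset (by simp), hab.subset (by simp)]
  · intro i j hij hj
    obtain ⟨rfl, rfl⟩ : i = 0 ∧ j = 1 := by omega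
    simpa using hba
  · intro i hi h2i
    omega
  · intro i hi h2i
    obtain rfl : i = 1 := by omega
    exact (precedes_iff_pair_sublist hπ.nodup (hab.subset (by simp))).mpr hab

theorem no_zigzag_implies_sorted_general
    (k : ℕ) (n : ℕ) (π : List ℕ) (hπ : IsPermWord n π)
    (h : ¬ ∃ z : ℕ → ℕ, IsZigzag π k z) :
    revstackSort^[k] π = idPerm n := by
  induction k generalizing π with
  | zero => exact eq_idPerm_of_not_isZigzag_zero hπ h
  | succ k ih =>
    rw [Function.iterate_succ_apply]
    exact ih _ ((revstackSort_perm π).trans hπ) fun ⟨_, hz⟩ =>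
      h (exists_isZigzag_succ_of_isZigzag_revstackSort hπ.nodup hz)

theorem no_zigzag_implies_sorted
    (k : ℕ) (hk : 1 ≤ k) (n : ℕ) (π : List ℕ) (hπ : IsPermWord n π)
    (h : ¬ ∃ z : ℕ → ℕ, IsZigzag π k z) :
    revstackSort^[k] π = idPerm n :=
  no_zigzag_implies_sorted_general k n π hπ h
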